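/- For every field F and every element x of the common meadow enlargement Option F of F, the identity 1 / x = x / (x · x) holds. -/
import Mathlib

universe u

namespace CommonMeadow

/-- Addition on the common meadow enlargement `Option F` of a field `F`. -/
def cmAdd {F : Type u} [Field F] : Option F → Option F → Option F
  | some a, some b => some (a + b)
  | _, _ => none

/-- Multiplication on the common meadow enlargement `Option F` of a field `F`. -/
def cmMul {F : Type u} [Field F] : Option F → Option F → Option F
  | some a, some b => some (a * b)
  | _, _ => none

/-- Negation on the common meadow enlargement `Option F` of a field `F`. -/
def cmNeg {F : Type u} [Field F] : Option F → Option F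
  | some a => some (-a)
  | none => none

open Classical in
/-- Division on the common meadow enlargement `Option F` of a field `F`:
`x / y = ⊥` if `x = ⊥` or `y = ⊥` or `y = 0`, and `x / y = x * y⁻¹` otherwise. -/
noncomputable def cmDiv {F : Type u} [Field F] : Option F → Option F → Option F
  | some a, some b => if b = 0 then none else some (a * b⁻¹)
  | _, _ => none

end CommonMeadow

open CommonMeadow in
/-- In the common meadow enlargement of any field, `1 / x = x / (x · x)`. -/
theorem one_div_eq_div_mul_self (F : Type u) [Field F] (x : Option F) :
    cmDiv (some 1) x = cmDiv x (cmMul x x) := by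
  cases x with
  | none => rfl
  | some a =>
    simp only [cmMul, cmDiv]
    by_cases h : a = 0
    · simp [h]
    · simp only [h, mul_eq_zero, or_self, if_neg h]
      rw [mul_inv, one_mul, mul_comm, mul_assoc, inv_mul_cancel₀ h, mul_one]
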